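/- arXiv:2603.22936 — 3 statements merged into one kernel-verified Lean document; each statement's English description precedes it below -/
import Mathlib

section
/- Let k be an integer with |k| ≥ 1, R > 1, and let φ, ω : [1,R] → ℂ be C² functions with φ(1) = φ(R) = 0 satisfying φ'' − ((k² − 1/4)/r²) φ = ω. Then there is an absolute constant C > 0 (independent of k, R, φ, ω) such that ‖φ'‖²_{L²} + k² ‖φ/r‖²_{L²} ≤ C k^{-2} ‖r ω‖²_{L²}. -/
/-!
Multiply the equation by `conj φ` and integrate over `[1, R]`. Since `φ` vanishes at both ends,
integrating by parts turns `∫ Re (φ'' conj φ)` into `-‖φ'‖²`, which gives the energy identity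
`‖φ'‖² + (k² - 1/4) ‖φ/r‖² = -∫ Re (ω conj φ)`. Writing `ω conj φ = (r ω) conj (φ / r)`, Young's
inequality bounds the right side by `‖r ω‖² / (2k²) + (k²/2) ‖φ/r‖²`; since `k² ≥ 1`, the term
`(k²/2 - 1/4) ‖φ/r‖²` left over on the left dominates `(k²/4) ‖φ/r‖²`, and `C = 2` works.
-/

open MeasureTheory Set ComplexConjugate

theorem ContinuousOn.integrableOn_Ioo_of_Icc {E : Type*} [NormedAddCommGroup E] {f : ℝ → E}
    {a b : ℝ} (hf : ContinuousOn f (Icc a b)) : IntegrableOn f (Ioo a b) :=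
  hf.integrableOn_Icc.mono_set Ioo_subset_Icc_self

theorem neg_re_mul_conj_le_of_young {c r : ℝ} (hc : 0 < c) (hr : 0 < r) (w p : ℂ) :
    -(w * conj p).re ≤ (2 * c)⁻¹ * (r ^ 2 * ‖w‖ ^ 2) + c / 2 * ‖p / r‖ ^ 2 := by
  have hsplit : ‖w‖ * ‖p‖ = (r * ‖w‖) * ‖p / r‖ := by
    rw [norm_div, Complex.norm_real, Real.norm_eq_abs, abs_of_pos hr]
    field_simp
  have hyoung : (r * ‖w‖) * ‖p / r‖ ≤ (2 * c)⁻¹ * (r * ‖w‖) ^ 2 + c / 2 * ‖p / r‖ ^ 2 := by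
    rw [← sub_nonneg]
    have key : (2 * c)⁻¹ * (r * ‖w‖ - c * ‖p / r‖) ^ 2 =
        (2 * c)⁻¹ * (r * ‖w‖) ^ 2 + c / 2 * ‖p / r‖ ^ 2 - (r * ‖w‖) * ‖p / r‖ := by
      field_simp
      ring
    rw [← key]
    positivity
  calc -(w * conj p).re ≤ ‖w * conj p‖ := by simpa using Complex.re_le_norm (-(w * conj p))
    _ = (r * ‖w‖) * ‖p / r‖ := by rw [norm_mul, RCLike.norm_conj, hsplit]
    _ ≤ _ := by rw [mul_pow] at hyoung; exact hyoung

section BoundaryValueProblem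

variable {a b : ℝ} {φ φ' φ'' : ℝ → ℂ}

theorem ContinuousOn.div_ofReal {f : ℝ → ℂ} (ha : 0 < a) (hf : ContinuousOn f (Icc a b)) :
    ContinuousOn (fun r => f r / (r : ℂ)) (Icc a b) :=
  hf.div Complex.continuous_ofReal.continuousOn fun _ hr =>
    Complex.ofReal_ne_zero.2 (ha.trans_le hr.1).ne'

theorem ContinuousOn.sub_div_sq_mul {ν : ℂ} {f g : ℝ → ℂ} (ha : 0 < a)
    (hf : ContinuousOn f (Icc a b)) (hg : ContinuousOn g (Icc a b)) :
    ContinuousOn (fun r => f r - ν / (r : ℂ) ^ 2 * g r) (Icc a b) :=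
  hf.sub ((continuousOn_const.div (Complex.continuous_ofReal.continuousOn.pow 2) fun _ hr =>
    pow_ne_zero 2 (Complex.ofReal_ne_zero.2 (ha.trans_le hr.1).ne')).mul hg)

theorem integral_re_mul_conj_eq_neg_integral_norm_deriv_sq (hab : a ≤ b)
    (hφ : ∀ r ∈ Icc a b, HasDerivAt φ (φ' r) r) (hφ' : ∀ r ∈ Icc a b, HasDerivAt φ' (φ'' r) r)
    (hφ'' : ContinuousOn φ'' (Icc a b)) (hφa : φ a = 0) (hφb : φ b = 0) :
    ∫ r in Ioo a b, (φ'' r * conj (φ r)).re = -∫ r in Ioo a b, ‖φ' r‖ ^ 2 := by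
  have hcφ : ContinuousOn φ (Icc a b) := HasDerivAt.continuousOn hφ
  have hcφ' : ContinuousOn φ' (Icc a b) := HasDerivAt.continuousOn hφ'
  have hderiv : ∀ r ∈ Icc a b, HasDerivAt (fun s => (φ' s * conj (φ s)).re)
      ((φ'' r * conj (φ r)).re + ‖φ' r‖ ^ 2) r := by
    intro r hr
    refine (Complex.reCLM.hasFDerivAt.comp_hasDerivAt r
      ((hφ' r hr).mul (hφ r hr).star)).congr_deriv ?_
    simp [Complex.mul_conj', ← Complex.ofReal_pow]
  have hcont : ContinuousOn (fun r => (φ'' r * conj (φ r)).re + ‖φ' r‖ ^ 2) (Icc a b) :=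
    (Complex.continuous_re.comp_continuousOn (hφ''.mul hcφ.star)).add (hcφ'.norm.pow 2)
  have hftc := intervalIntegral.integral_eq_sub_of_hasDerivAt
    (fun r hr => hderiv r (by rwa [uIcc_of_le hab] at hr))
    (hcont.intervalIntegrable_of_Icc hab)
  have hint : IntegrableOn (fun r => (φ'' r * conj (φ r)).re) (Ioo a b) :=
    (Complex.continuous_re.comp_continuousOn (hφ''.mul hcφ.star)).integrableOn_Ioo_of_Icc
  have hint' : IntegrableOn (fun r => ‖φ' r‖ ^ 2) (Ioo a b) :=
    (hcφ'.norm.pow 2).integrableOn_Ioo_of_Icc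
  rw [intervalIntegral.integral_of_le hab, integral_Ioc_eq_integral_Ioo,
    integral_add hint hint'] at hftc
  simp only [hφa, hφb, map_zero, mul_zero, Complex.zero_re, sub_zero] at hftc
  linarith

theorem integral_norm_deriv_sq_add_mul_integral_eq {ν : ℝ} {ω : ℝ → ℂ} (ha : 0 < a)
    (hab : a ≤ b)
    (hφ : ∀ r ∈ Icc a b, HasDerivAt φ (φ' r) r) (hφ' : ∀ r ∈ Icc a b, HasDerivAt φ' (φ'' r) r)
    (hφ'' : ContinuousOn φ'' (Icc a b)) (hφa : φ a = 0) (hφb : φ b = 0)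
    (hω : ∀ r ∈ Icc a b, φ'' r - ((ν : ℂ) / (r : ℂ) ^ 2) * φ r = ω r) :
    (∫ r in Ioo a b, ‖φ' r‖ ^ 2) + ν * ∫ r in Ioo a b, ‖φ r / (r : ℂ)‖ ^ 2 =
      -∫ r in Ioo a b, (ω r * conj (φ r)).re := by
  have hcφ : ContinuousOn φ (Icc a b) := HasDerivAt.continuousOn hφ
  have hcω : ContinuousOn ω (Icc a b) :=
    (hφ''.sub_div_sq_mul ha hcφ).congr fun r hr => (hω r hr).symm
  have hpointwise : ∀ r ∈ Ioo a b,
      (φ'' r * conj (φ r)).re = (ω r * conj (φ r)).re + ν * ‖φ r / (r : ℂ)‖ ^ 2 := by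
    intro r hr
    have hr' : (0 : ℝ) < r := ha.trans hr.1
    rw [← hω r (Ioo_subset_Icc_self hr), sub_mul, mul_assoc, Complex.mul_conj', norm_div,
      Complex.norm_real, Real.norm_of_nonneg hr'.le]
    norm_cast
    rw [Complex.sub_re, Complex.ofReal_re]
    ring
  have hint : IntegrableOn (fun r => (ω r * conj (φ r)).re) (Ioo a b) :=
    (Complex.continuous_re.comp_continuousOn (hcω.mul hcφ.star)).integrableOn_Ioo_of_Icc
  have hint' : IntegrableOn (fun r => ‖φ r / (r : ℂ)‖ ^ 2) (Ioo a b) :=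
    ((hcφ.div_ofReal ha).norm.pow 2).integrableOn_Ioo_of_Icc
  rw [← neg_eq_iff_eq_neg, neg_add,
    ← integral_re_mul_conj_eq_neg_integral_norm_deriv_sq hab hφ hφ' hφ'' hφa hφb,
    setIntegral_congr_fun measurableSet_Ioo hpointwise, integral_add hint (hint'.const_mul ν),
    integral_const_mul]
  ring

theorem integral_norm_deriv_sq_add_mul_integral_le {ν c : ℝ} {ω : ℝ → ℂ} (hc : 0 < c)
    (ha : 0 < a) (hab : a ≤ b)
    (hφ : ∀ r ∈ Icc a b, HasDerivAt φ (φ' r) r) (hφ' : ∀ r ∈ Icc a b, HasDerivAt φ' (φ'' r) r)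
    (hφ'' : ContinuousOn φ'' (Icc a b)) (hφa : φ a = 0) (hφb : φ b = 0)
    (hω : ∀ r ∈ Icc a b, φ'' r - ((ν : ℂ) / (r : ℂ) ^ 2) * φ r = ω r) :
    (∫ r in Ioo a b, ‖φ' r‖ ^ 2) + ν * ∫ r in Ioo a b, ‖φ r / (r : ℂ)‖ ^ 2 ≤
      (2 * c)⁻¹ * (∫ r in Ioo a b, r ^ 2 * ‖ω r‖ ^ 2) +
        c / 2 * ∫ r in Ioo a b, ‖φ r / (r : ℂ)‖ ^ 2 := by
  have hcφ : ContinuousOn φ (Icc a b) := HasDerivAt.continuousOn hφ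
  have hcω : ContinuousOn ω (Icc a b) :=
    (hφ''.sub_div_sq_mul ha hcφ).congr fun r hr => (hω r hr).symm
  have hint : IntegrableOn (fun r => (ω r * conj (φ r)).re) (Ioo a b) :=
    (Complex.continuous_re.comp_continuousOn (hcω.mul hcφ.star)).integrableOn_Ioo_of_Icc
  have hintω : IntegrableOn (fun r => r ^ 2 * ‖ω r‖ ^ 2) (Ioo a b) :=
    ((continuousOn_id.pow 2).mul (hcω.norm.pow 2)).integrableOn_Ioo_of_Icc
  have hintφ : IntegrableOn (fun r => ‖φ r / (r : ℂ)‖ ^ 2) (Ioo a b) :=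
    ((hcφ.div_ofReal ha).norm.pow 2).integrableOn_Ioo_of_Icc
  rw [integral_norm_deriv_sq_add_mul_integral_eq ha hab hφ hφ' hφ'' hφa hφb hω, ← integral_neg,
    ← integral_const_mul, ← integral_const_mul, ← integral_add (hintω.const_mul _)
      (hintφ.const_mul _)]
  exact setIntegral_mono_on hint.neg ((hintω.const_mul _).add (hintφ.const_mul _))
    measurableSet_Ioo fun r hr => neg_re_mul_conj_le_of_young hc (ha.trans hr.1) _ _

end BoundaryValueProblem

theorem stmt_4 :
    ∃ C > (0 : ℝ), ∀ (k : ℤ), 1 ≤ |k| → ∀ (R : ℝ), 1 < R →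
    ∀ (φ φ' φ'' ω : ℝ → ℂ),
    (∀ r ∈ Icc (1 : ℝ) R, HasDerivAt φ (φ' r) r) →
    (∀ r ∈ Icc (1 : ℝ) R, HasDerivAt φ' (φ'' r) r) →
    ContinuousOn φ'' (Icc (1 : ℝ) R) →
    φ 1 = 0 → φ R = 0 →
    (∀ r ∈ Icc (1 : ℝ) R,
      φ'' r - (((k : ℂ) ^ 2 - 1 / 4) / (r : ℂ) ^ 2) * φ r = ω r) →
    (∫ r in Ioo (1 : ℝ) R, ‖φ' r‖ ^ 2) +
      (k : ℝ) ^ 2 * ∫ r in Ioo (1 : ℝ) R, ‖φ r / (r : ℂ)‖ ^ 2 ≤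
      C * ((k : ℝ) ^ 2)⁻¹ * ∫ r in Ioo (1 : ℝ) R, r ^ 2 * ‖ω r‖ ^ 2 := by
  refine ⟨2, two_pos, fun k hk R hR φ φ' φ'' ω hφ hφ' hφ'' hφ1 hφR hω => ?_⟩
  have hk2 : (1 : ℝ) ≤ (k : ℝ) ^ 2 := by
    have : (1 : ℝ) ≤ |(k : ℝ)| := by exact_mod_cast hk
    nlinarith [sq_abs (k : ℝ)]
  have hω' : ∀ r ∈ Icc (1 : ℝ) R,
      φ'' r - ((((k : ℝ) ^ 2 - 1 / 4 : ℝ) : ℂ) / (r : ℂ) ^ 2) * φ r = ω r := by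
    push_cast
    exact hω
  have hB : 0 ≤ ∫ r in Ioo (1 : ℝ) R, ‖φ r / (r : ℂ)‖ ^ 2 := by positivity
  have hA : 0 ≤ ∫ r in Ioo (1 : ℝ) R, ‖φ' r‖ ^ 2 := by positivity
  have hest := integral_norm_deriv_sq_add_mul_integral_le (c := (k : ℝ) ^ 2) (by positivity)
    one_pos hR.le hφ hφ' hφ'' hφ1 hφR hω'
  rw [mul_inv] at hest
  nlinarith [mul_le_mul_of_nonneg_right hk2 hB]
end

section
/- Let k be an integer with |k| ≥ 1 and let φ : [1,R] → ℂ be C² with φ(1) = φ(R) = 0 and set ω = φ'' − ((k²−1/4)/r²)φ. Then ‖φ'‖²_{L²(1,R)} + k² ‖φ/r‖²_{L²(1,R)} ≤ C |k|^{-1} ‖r^{1/2} ω‖²_{L¹(1,R)} for an absolute constant C. -/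
open MeasureTheory Set RealInnerProductSpace

/-!
Pairing the equation with `φ` and integrating by parts gives the energy identity
`‖φ'‖² + (k² - 1/4) ‖φ/r‖² = -Re ∫ φ̄ ω ≤ ∫ |φ| |ω|`. Since `φ 1 = 0`,
`|φ r|² = ∫₁ʳ 2 Re (φ̄ φ') ≤ r ∫₁ᴿ (|φ'|² / |k| + |k| |φ/s|²) = r E / |k|` by weighted AM-GM,
where `E` is the left-hand side of the claim. Hence `∫ |φ| |ω| ≤ (E / |k|)^{1/2} ‖r^{1/2} ω‖_{L¹}`,
and since `k² - 1/4 ≥ 3k²/4` this gives `(3E/4)² ≤ E ‖r^{1/2} ω‖²_{L¹} / |k|`, i.e. `C = 16/9`.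
-/

section

variable {F : Type*} [NormedAddCommGroup F] [InnerProductSpace ℝ F]
  {φ φ' φ'' ω : ℝ → F} {a b : ℝ}

theorem integral_inner_second_deriv_eq_neg_integral_norm_deriv_sq (hab : a ≤ b)
    (hφ : ∀ t ∈ Icc a b, HasDerivAt φ (φ' t) t) (hφ' : ∀ t ∈ Icc a b, HasDerivAt φ' (φ'' t) t)
    (hφ'' : ContinuousOn φ'' (Icc a b)) (ha : φ a = 0) (hb : φ b = 0) :
    ∫ t in a..b, ⟪φ t, φ'' t⟫ = -∫ t in a..b, ‖φ' t‖ ^ 2 := by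
  have hφc : ContinuousOn φ (Icc a b) := HasDerivAt.continuousOn hφ
  have hφ'c : ContinuousOn φ' (Icc a b) := HasDerivAt.continuousOn hφ'
  have hderiv : ∀ t ∈ uIcc a b,
      HasDerivAt (fun t => ⟪φ t, φ' t⟫) (⟪φ t, φ'' t⟫ + ‖φ' t‖ ^ 2) t := by
    intro t ht
    rw [uIcc_of_le hab] at ht
    simpa only [real_inner_self_eq_norm_sq] using (hφ t ht).inner ℝ (hφ' t ht)
  have hint₁ : IntervalIntegrable (fun t => ⟪φ t, φ'' t⟫) volume a b :=
    (hφc.inner hφ'').intervalIntegrable_of_Icc hab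
  have hint₂ : IntervalIntegrable (fun t => ‖φ' t‖ ^ 2) volume a b :=
    (hφ'c.norm.pow 2).intervalIntegrable_of_Icc hab
  have hftc := intervalIntegral.integral_eq_sub_of_hasDerivAt hderiv (hint₁.add hint₂)
  rw [intervalIntegral.integral_add hint₁ hint₂, ha, hb] at hftc
  simp only [inner_zero_left, sub_zero] at hftc
  linarith

theorem norm_sq_le_integral_two_mul_norm_mul_norm_deriv (hab : a ≤ b)
    (hφ : ∀ t ∈ Icc a b, HasDerivAt φ (φ' t) t) (hφ' : ContinuousOn φ' (Icc a b))
    (ha : φ a = 0) :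
    ‖φ b‖ ^ 2 ≤ ∫ t in a..b, 2 * (‖φ t‖ * ‖φ' t‖) := by
  have hφc : ContinuousOn φ (Icc a b) := HasDerivAt.continuousOn hφ
  have hderiv : ∀ t ∈ uIcc a b, HasDerivAt (‖φ ·‖ ^ 2) (2 * ⟪φ t, φ' t⟫) t := by
    intro t ht
    rw [uIcc_of_le hab] at ht
    exact (hφ t ht).norm_sq
  have hftc := intervalIntegral.integral_eq_sub_of_hasDerivAt hderiv
    ((continuousOn_const.mul (hφc.inner hφ')).intervalIntegrable_of_Icc hab)
  rw [ha, norm_zero, zero_pow two_ne_zero, sub_zero] at hftc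
  rw [← hftc]
  exact intervalIntegral.integral_mono_on hab
    ((continuousOn_const.mul (hφc.inner hφ')).intervalIntegrable_of_Icc hab)
    ((continuousOn_const.mul (hφc.norm.mul hφ'.norm)).intervalIntegrable_of_Icc hab)
    fun t _ => by gcongr; exact real_inner_le_norm _ _

lemma two_mul_mul_le_weighted_sq_add_sq {x y t κ : ℝ} (ht : 0 < t) (hκ : 0 < κ) :
    2 * (x * y) ≤ t * (κ⁻¹ * y ^ 2 + κ * (x ^ 2 / t ^ 2)) := by
  have h : 0 ≤ t / κ * (y - κ * x / t) ^ 2 := by positivity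
  have e : t / κ * (y - κ * x / t) ^ 2 = t * (κ⁻¹ * y ^ 2 + κ * (x ^ 2 / t ^ 2)) - 2 * (x * y) := by
    field_simp
    ring
  linarith

theorem norm_sq_le_mul_weighted_energy (ha : 0 < a) {r κ : ℝ} (hr : r ∈ Icc a b) (hκ : 0 < κ)
    (hφ : ∀ t ∈ Icc a b, HasDerivAt φ (φ' t) t) (hφ' : ContinuousOn φ' (Icc a b))
    (ha0 : φ a = 0) :
    ‖φ r‖ ^ 2 ≤
      r * (κ⁻¹ * (∫ t in a..b, ‖φ' t‖ ^ 2) + κ * ∫ t in a..b, ‖φ t‖ ^ 2 / t ^ 2) := by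
  have hsub : Icc a r ⊆ Icc a b := Icc_subset_Icc_right hr.2
  have hab : a ≤ b := hr.1.trans hr.2
  have hφc : ContinuousOn φ (Icc a b) := HasDerivAt.continuousOn hφ
  have hφc' : ContinuousOn (fun t => ‖φ t‖ ^ 2 / t ^ 2) (Icc a b) :=
    (hφc.norm.pow 2).div (continuousOn_id.pow 2) fun t ht => by nlinarith [ht.1]
  have hA : IntervalIntegrable (fun t => ‖φ' t‖ ^ 2) volume a b :=
    (hφ'.norm.pow 2).intervalIntegrable_of_Icc hab
  have hB : IntervalIntegrable (fun t => ‖φ t‖ ^ 2 / t ^ 2) volume a b :=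
    hφc'.intervalIntegrable_of_Icc hab
  have hg : IntervalIntegrable (fun t => r * (κ⁻¹ * ‖φ' t‖ ^ 2 + κ * (‖φ t‖ ^ 2 / t ^ 2)))
      volume a b :=
    ((hA.const_mul _).add (hB.const_mul _)).const_mul r
  calc ‖φ r‖ ^ 2 ≤ ∫ t in a..r, 2 * (‖φ t‖ * ‖φ' t‖) :=
        norm_sq_le_integral_two_mul_norm_mul_norm_deriv hr.1 (fun t ht => hφ t (hsub ht))
          (hφ'.mono hsub) ha0
    _ ≤ ∫ t in a..r, r * (κ⁻¹ * ‖φ' t‖ ^ 2 + κ * (‖φ t‖ ^ 2 / t ^ 2)) := by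
        refine intervalIntegral.integral_mono_on hr.1 ?_ (hg.mono_set ?_) fun t ht => ?_
        · exact (continuousOn_const.mul ((hφc.mono hsub).norm.mul (hφ'.mono hsub).norm)
            ).intervalIntegrable_of_Icc hr.1
        · rw [uIcc_of_le hr.1, uIcc_of_le hab]
          exact hsub
        · refine (two_mul_mul_le_weighted_sq_add_sq (ha.trans_le ht.1) hκ).trans ?_
          gcongr
          exact ht.2
    _ ≤ ∫ t in a..b, r * (κ⁻¹ * ‖φ' t‖ ^ 2 + κ * (‖φ t‖ ^ 2 / t ^ 2)) := by
        have hr0 : 0 ≤ r := ha.le.trans hr.1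
        exact intervalIntegral.integral_mono_interval le_rfl hr.1 hr.2
          (Filter.Eventually.of_forall fun t => by positivity) hg
    _ = r * (κ⁻¹ * (∫ t in a..b, ‖φ' t‖ ^ 2) + κ * ∫ t in a..b, ‖φ t‖ ^ 2 / t ^ 2) := by
        rw [intervalIntegral.integral_const_mul,
          intervalIntegral.integral_add (hA.const_mul _) (hB.const_mul _),
          intervalIntegral.integral_const_mul, intervalIntegral.integral_const_mul]

theorem continuousOn_of_eq_sub_div_sq_smul (ha : 0 < a) {c : ℝ}
    (hφ : ContinuousOn φ (Icc a b)) (hφ'' : ContinuousOn φ'' (Icc a b))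
    (hω : ∀ t ∈ Icc a b, ω t = φ'' t - (c / t ^ 2) • φ t) : ContinuousOn ω (Icc a b) :=
  (hφ''.sub ((continuousOn_const.div (continuousOn_id.pow 2)
    fun _ ht => pow_ne_zero 2 (ha.trans_le ht.1).ne').smul hφ)).congr hω

theorem integral_norm_deriv_sq_add_mul_le (ha : 0 < a) (hab : a ≤ b) {c : ℝ}
    (hφ : ∀ t ∈ Icc a b, HasDerivAt φ (φ' t) t) (hφ' : ∀ t ∈ Icc a b, HasDerivAt φ' (φ'' t) t)
    (hφ'' : ContinuousOn φ'' (Icc a b)) (ha0 : φ a = 0) (hb0 : φ b = 0)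
    (hω : ∀ t ∈ Icc a b, ω t = φ'' t - (c / t ^ 2) • φ t) :
    (∫ t in a..b, ‖φ' t‖ ^ 2) + c * ∫ t in a..b, ‖φ t‖ ^ 2 / t ^ 2 ≤
      ∫ t in a..b, ‖φ t‖ * ‖ω t‖ := by
  have hφc : ContinuousOn φ (Icc a b) := HasDerivAt.continuousOn hφ
  have ht0 : ∀ t ∈ Icc a b, t ^ 2 ≠ 0 := fun t ht => pow_ne_zero 2 (ha.trans_le ht.1).ne'
  have hωc : ContinuousOn ω (Icc a b) := continuousOn_of_eq_sub_div_sq_smul ha hφc hφ'' hω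
  have hint₁ : IntervalIntegrable (fun t => ⟪φ t, φ'' t⟫) volume a b :=
    (hφc.inner hφ'').intervalIntegrable_of_Icc hab
  have hint₂ : IntervalIntegrable (fun t => c * (‖φ t‖ ^ 2 / t ^ 2)) volume a b :=
    (continuousOn_const.mul ((hφc.norm.pow 2).div (continuousOn_id.pow 2) ht0)
      ).intervalIntegrable_of_Icc hab
  have hinner : ∫ t in a..b, ⟪φ t, ω t⟫ =
      (∫ t in a..b, ⟪φ t, φ'' t⟫) - c * ∫ t in a..b, ‖φ t‖ ^ 2 / t ^ 2 := by
    rw [← intervalIntegral.integral_const_mul, ← intervalIntegral.integral_sub hint₁ hint₂]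
    refine intervalIntegral.integral_congr fun t ht => ?_
    rw [uIcc_of_le hab] at ht
    simp only [hω t ht, inner_sub_right, real_inner_smul_right, real_inner_self_eq_norm_sq]
    ring
  calc (∫ t in a..b, ‖φ' t‖ ^ 2) + c * ∫ t in a..b, ‖φ t‖ ^ 2 / t ^ 2
      = ∫ t in a..b, -⟪φ t, ω t⟫ := by
        rw [intervalIntegral.integral_neg, hinner,
          integral_inner_second_deriv_eq_neg_integral_norm_deriv_sq hab hφ hφ' hφ'' ha0 hb0]
        ring
    _ ≤ ∫ t in a..b, ‖φ t‖ * ‖ω t‖ :=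
        intervalIntegral.integral_mono_on hab ((hφc.inner hωc).neg.intervalIntegrable_of_Icc hab)
          ((hφc.norm.mul hωc.norm).intervalIntegrable_of_Icc hab)
          fun t _ => (neg_le_abs _).trans (abs_real_inner_le_norm _ _)

lemma le_inv_mul_sq_of_le_sqrt_div_mul {P κ M : ℝ} (hP : 0 ≤ P) (hκ : 0 < κ)
    (h : P ≤ √(P / κ) * M) : P ≤ κ⁻¹ * M ^ 2 := by
  rcases hP.eq_or_lt with rfl | hP
  · positivity
  have hsq : P * P ≤ P * (κ⁻¹ * M ^ 2) :=
    calc P * P = P ^ 2 := (sq P).symm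
      _ ≤ (√(P / κ) * M) ^ 2 := pow_le_pow_left₀ hP.le h 2
      _ = P * (κ⁻¹ * M ^ 2) := by rw [mul_pow, Real.sq_sqrt (by positivity)]; ring
  exact le_of_mul_le_mul_left hsq hP

theorem energy_le_inv_mul_sq_integral_sqrt_mul_norm (ha : 0 < a) (hab : a ≤ b) {κ : ℝ}
    (hκ : 1 ≤ κ)
    (hφ : ∀ t ∈ Icc a b, HasDerivAt φ (φ' t) t) (hφ' : ∀ t ∈ Icc a b, HasDerivAt φ' (φ'' t) t)
    (hφ'' : ContinuousOn φ'' (Icc a b)) (ha0 : φ a = 0) (hb0 : φ b = 0)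
    (hω : ∀ t ∈ Icc a b, ω t = φ'' t - ((κ ^ 2 - 1 / 4) / t ^ 2) • φ t) :
    (∫ t in a..b, ‖φ' t‖ ^ 2) + κ ^ 2 * ∫ t in a..b, ‖φ t‖ ^ 2 / t ^ 2 ≤
      16 / 9 * κ⁻¹ * (∫ t in a..b, √t * ‖ω t‖) ^ 2 := by
  set A := ∫ t in a..b, ‖φ' t‖ ^ 2
  set B := ∫ t in a..b, ‖φ t‖ ^ 2 / t ^ 2
  set M := ∫ t in a..b, √t * ‖ω t‖
  have hκ0 : 0 < κ := one_pos.trans_le hκ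
  have hA : 0 ≤ A := intervalIntegral.integral_nonneg hab fun t _ => by positivity
  have hB : 0 ≤ B := intervalIntegral.integral_nonneg hab fun t _ => by positivity
  have hφ'c : ContinuousOn φ' (Icc a b) := HasDerivAt.continuousOn hφ'
  have hP : 0 ≤ A + κ ^ 2 * B := add_nonneg hA (mul_nonneg (sq_nonneg κ) hB)
  have hφ_le : ∀ t ∈ Icc a b, ‖φ t‖ ≤ √((A + κ ^ 2 * B) / κ) * √t := by
    intro t ht
    have hPt : 0 ≤ (A + κ ^ 2 * B) / κ * t := mul_nonneg (div_nonneg hP hκ0.le) (ha.le.trans ht.1)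
    rw [← Real.sqrt_mul (div_nonneg hP hκ0.le), Real.le_sqrt (norm_nonneg _) hPt]
    convert norm_sq_le_mul_weighted_energy ha ht hκ0 hφ hφ'c ha0 using 1
    field_simp
    ring
  have hM : ∫ t in a..b, ‖φ t‖ * ‖ω t‖ ≤ √((A + κ ^ 2 * B) / κ) * M := by
    have hωc : ContinuousOn ω (Icc a b) :=
      continuousOn_of_eq_sub_div_sq_smul ha (HasDerivAt.continuousOn hφ) hφ'' hω
    rw [← intervalIntegral.integral_const_mul]
    refine intervalIntegral.integral_mono_on hab
      (((HasDerivAt.continuousOn hφ).norm.mul hωc.norm).intervalIntegrable_of_Icc hab)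
      ((continuousOn_const.mul (Real.continuous_sqrt.continuousOn.mul hωc.norm)
        ).intervalIntegrable_of_Icc hab) fun t ht => ?_
    rw [← mul_assoc]
    gcongr
    exact hφ_le t ht
  have henergy := (integral_norm_deriv_sq_add_mul_le ha hab hφ hφ' hφ'' ha0 hb0 hω).trans hM
  have hκB : 0 ≤ (κ ^ 2 - 1) * B := mul_nonneg (by nlinarith) hB
  calc A + κ ^ 2 * B ≤ κ⁻¹ * (4 / 3 * M) ^ 2 :=
        le_inv_mul_sq_of_le_sqrt_div_mul hP hκ0 (by linarith)
    _ = 16 / 9 * κ⁻¹ * M ^ 2 := by ring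

end

theorem stmt_5 :
    ∃ C > (0 : ℝ), ∀ (k : ℤ), 1 ≤ |k| → ∀ (R : ℝ), 1 < R →
    ∀ (φ φ' φ'' ω : ℝ → ℂ),
    (∀ r ∈ Icc (1 : ℝ) R, HasDerivAt φ (φ' r) r) →
    (∀ r ∈ Icc (1 : ℝ) R, HasDerivAt φ' (φ'' r) r) →
    ContinuousOn φ'' (Icc (1 : ℝ) R) →
    φ 1 = 0 → φ R = 0 →
    (∀ r ∈ Icc (1 : ℝ) R,
      φ'' r - (((k : ℂ) ^ 2 - 1 / 4) / (r : ℂ) ^ 2) * φ r = ω r) →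
    (∫ r in Ioo (1 : ℝ) R, ‖φ' r‖ ^ 2) +
      (k : ℝ) ^ 2 * ∫ r in Ioo (1 : ℝ) R, ‖φ r / (r : ℂ)‖ ^ 2 ≤
      C * (|k| : ℝ)⁻¹ * (∫ r in Ioo (1 : ℝ) R, r ^ ((1 : ℝ) / 2) * ‖ω r‖) ^ 2 := by
  refine ⟨16 / 9, by norm_num, fun k hk R hR φ φ' φ'' ω hφ hφ' hφ'' h1 hR0 hω => ?_⟩
  have hκ : (1 : ℝ) ≤ |(k : ℝ)| := by exact_mod_cast hk
  have hω' : ∀ r ∈ Icc 1 R, ω r = φ'' r - ((|(k : ℝ)| ^ 2 - 1 / 4) / r ^ 2) • φ r := by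
    intro r hr
    rw [← hω r hr, Complex.real_smul, sq_abs]
    push_cast
    ring
  have hnorm (r : ℝ) : ‖φ r / (r : ℂ)‖ ^ 2 = ‖φ r‖ ^ 2 / r ^ 2 := by
    rw [norm_div, Complex.norm_real, Real.norm_eq_abs, div_pow, sq_abs]
  have h := energy_le_inv_mul_sq_integral_sqrt_mul_norm one_pos hR.le hκ hφ hφ' hφ'' h1 hR0 hω'
  rw [sq_abs] at h
  simpa only [← integral_Ioc_eq_integral_Ioo, ← intervalIntegral.integral_of_le hR.le, hnorm,
    ← Real.sqrt_eq_rpow] using h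
end

section
/- Let φ : [1,R] → ℂ be C² with φ(1) = φ(R) = 0 and satisfy φ'' + r^{-1}φ' = ω. Then for all r ∈ [1,R], r φ'(r) = ∫₁^r s ω(s) ds + φ'(1), and consequently ‖∂_r φ‖_{L^∞(1,R)} ≤ C (R/(R−1))^{1/2} (1 + log R) ‖r^{3/2} ω‖_{L²(1,R)} for an absolute constant C. -/
/-!
Multiplying the equation by `r` gives `(r φ')' = r ω`, hence `r φ'(r) = F(r) + φ'(1)` with
`F(r) = ∫₁^r s ω(s) ds`. Cauchy–Schwarz against the weight `s⁻¹` bounds `|F(r)|` by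
`√(log R) ‖r^{3/2} ω‖_{L²}`. The boundary values `φ(1) = φ(R) = 0` give `∫₁^R φ' = 0`, that is
`∫₁^R r⁻¹ (F(r) + φ'(1)) dr = 0`, so `φ'(1)` is minus an `r⁻¹`-weighted average of `F` and obeys
the same bound. Hence `|φ'| ≤ 2 √(log R) ‖r^{3/2} ω‖_{L²}`, which implies the claim with `C = 2`.
-/

open MeasureTheory Set intervalIntegral

theorem integral_mul_le_sqrt_integral_sq_mul_sqrt {α : Type*} [MeasurableSpace α] {μ : Measure α}
    {f g : α → ℝ} (hf0 : 0 ≤ᵐ[μ] f) (hg0 : 0 ≤ᵐ[μ] g) (hf : MemLp f 2 μ) (hg : MemLp g 2 μ) :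
    ∫ x, f x * g x ∂μ ≤ √(∫ x, f x ^ 2 ∂μ) * √(∫ x, g x ^ 2 ∂μ) := by
  have := integral_mul_le_Lp_mul_Lq_of_nonneg Real.HolderConjugate.two_two hf0 hg0
    (by simpa using hf) (by simpa using hg)
  simpa [Real.sqrt_eq_rpow] using this

theorem integral_mul_le_sqrt_log_mul_sqrt {a b : ℝ} {g : ℝ → ℝ} (ha : 0 < a) (hab : a ≤ b)
    (hg : ContinuousOn g (Icc a b)) (hg0 : ∀ s ∈ Icc a b, 0 ≤ g s) :
    ∫ s in a..b, s * g s ≤ √(Real.log (b / a)) * √(∫ s in a..b, s ^ 3 * g s ^ 2) := by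
  have memLp : ∀ h : ℝ → ℝ, ContinuousOn h (Icc a b) → MemLp h 2 (volume.restrict (Ioc a b)) :=
    fun h hh => (memLp_two_iff_integrable_sq
      ((hh.mono Ioc_subset_Icc_self).aestronglyMeasurable measurableSet_Ioc)).2
      ((hh.pow 2).integrableOn_Icc.mono_set Ioc_subset_Icc_self)
  have hf : ContinuousOn (fun s => √s⁻¹) (Icc a b) :=
    (continuousOn_inv₀.mono fun s hs => (ha.trans_le hs.1).ne').sqrt
  have hg' : ContinuousOn (fun s => √(s ^ 3) * g s) (Icc a b) := by fun_prop
  have hcs := integral_mul_le_sqrt_integral_sq_mul_sqrt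
    (ae_restrict_of_forall_mem measurableSet_Ioc fun s _ => Real.sqrt_nonneg s⁻¹)
    (ae_restrict_of_forall_mem measurableSet_Ioc fun s hs =>
      mul_nonneg (Real.sqrt_nonneg (s ^ 3)) (hg0 s (Ioc_subset_Icc_self hs)))
    (memLp _ hf) (memLp _ hg')
  have hprod : ∀ s ∈ Ioc a b, √s⁻¹ * (√(s ^ 3) * g s) = s * g s := fun s hs => by
    have hs0 : 0 < s := ha.trans hs.1
    rw [← mul_assoc, ← Real.sqrt_mul (inv_nonneg.2 hs0.le),
      show s⁻¹ * s ^ 3 = s ^ 2 by field_simp, Real.sqrt_sq hs0.le]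
  have hsq₁ : ∀ s ∈ Ioc a b, √s⁻¹ ^ 2 = s⁻¹ := fun s hs =>
    Real.sq_sqrt (inv_nonneg.2 (ha.trans hs.1).le)
  have hsq₂ : ∀ s ∈ Ioc a b, (√(s ^ 3) * g s) ^ 2 = s ^ 3 * g s ^ 2 := fun s hs => by
    rw [mul_pow, Real.sq_sqrt (pow_nonneg (ha.trans hs.1).le 3)]
  rw [setIntegral_congr_fun measurableSet_Ioc hprod, setIntegral_congr_fun measurableSet_Ioc hsq₁,
    setIntegral_congr_fun measurableSet_Ioc hsq₂] at hcs
  rwa [← integral_inv_of_pos ha (ha.trans_le hab), integral_of_le hab, integral_of_le hab,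
    integral_of_le hab]

theorem norm_le_of_integral_smul_add_eq_zero {E : Type*} [NormedAddCommGroup E] [NormedSpace ℝ E]
    [CompleteSpace E] {a b B : ℝ} {w : ℝ → ℝ} {F : ℝ → E} {c : E} (hab : a ≤ b)
    (hw : ContinuousOn w (Icc a b)) (hw0 : ∀ r ∈ Icc a b, 0 ≤ w r) (hwpos : 0 < ∫ r in a..b, w r)
    (hF : ContinuousOn F (Icc a b)) (hFB : ∀ r ∈ Icc a b, ‖F r‖ ≤ B)
    (h : ∫ r in a..b, w r • (F r + c) = 0) : ‖c‖ ≤ B := by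
  rw [← uIcc_of_le hab] at hw hF
  have hwF : IntervalIntegrable (fun r => w r • F r) volume a b :=
    (hw.smul hF).intervalIntegrable
  have hwc : IntervalIntegrable (fun r => w r • c) volume a b :=
    (hw.smul continuousOn_const).intervalIntegrable
  have hc : (∫ r in a..b, w r) • c = -∫ r in a..b, w r • F r := by
    simp only [smul_add] at h
    rw [intervalIntegral.integral_add hwF hwc, intervalIntegral.integral_smul_const] at h
    exact eq_neg_of_add_eq_zero_right h
  have hbound : ‖∫ r in a..b, w r • F r‖ ≤ (∫ r in a..b, w r) * B := by
    rw [← intervalIntegral.integral_mul_const]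
    refine norm_integral_le_of_norm_le hab (ae_of_all _ fun r hr => ?_)
      (hw.intervalIntegrable.mul_const B)
    have hr := Ioc_subset_Icc_self hr
    rw [norm_smul, Real.norm_of_nonneg (hw0 r hr)]
    exact mul_le_mul_of_nonneg_left (hFB r hr) (hw0 r hr)
  rw [← mul_le_mul_iff_of_pos_left hwpos, ← Real.norm_of_nonneg hwpos.le, ← norm_smul, hc, norm_neg,
    Real.norm_of_nonneg hwpos.le]
  exact hbound

theorem mul_deriv_eq_integral_add {a b r : ℝ} {φ' φ'' ω : ℝ → ℂ} (ha : 0 < a)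
    (hφ' : ∀ s ∈ Icc a b, HasDerivAt φ' (φ'' s) s) (hω : ContinuousOn ω (Icc a b))
    (hode : ∀ s ∈ Icc a b, φ'' s + (s : ℂ)⁻¹ * φ' s = ω s) (hr : r ∈ Icc a b) :
    (r : ℂ) * φ' r = (∫ s in a..r, (s : ℂ) * ω s) + a * φ' a := by
  have hsub : uIcc a r ⊆ Icc a b := by
    rw [uIcc_of_le hr.1]; exact Icc_subset_Icc_right hr.2
  have hderiv : ∀ s ∈ uIcc a r, HasDerivAt (fun u : ℝ => (u : ℂ) * φ' u) (s * ω s) s := by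
    intro s hs
    have hs := hsub hs
    have hs0 : (s : ℂ) ≠ 0 := Complex.ofReal_ne_zero.2 (ha.trans_le hs.1).ne'
    refine ((hasDerivAt_id s).ofReal_comp.mul (hφ' s hs)).congr_deriv ?_
    rw [← hode s hs]
    field_simp
    simp only [id, Complex.ofReal_one, one_mul]
    ring
  rw [integral_eq_sub_of_hasDerivAt hderiv
    ((Complex.continuous_ofReal.continuousOn.mul hω).mono hsub).intervalIntegrable]
  ring

theorem norm_integral_ofReal_mul_le {a b r : ℝ} {ω : ℝ → ℂ} (ha : 0 < a) (hr : r ∈ Icc a b)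
    (hω : ContinuousOn ω (Icc a b)) :
    ‖∫ s in a..r, (s : ℂ) * ω s‖ ≤
      √(Real.log (b / a)) * √(∫ s in Ioo a b, s ^ 3 * ‖ω s‖ ^ 2) := by
  have hsub : Icc a r ⊆ Icc a b := Icc_subset_Icc_right hr.2
  have hr0 : 0 < r := ha.trans_le hr.1
  calc ‖∫ s in a..r, (s : ℂ) * ω s‖ ≤ ∫ s in a..r, s * ‖ω s‖ := by
        refine (intervalIntegral.norm_integral_le_integral_norm hr.1).trans_eq
          (integral_congr fun s hs => ?_)
        rw [uIcc_of_le hr.1] at hs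
        simp [abs_of_pos (ha.trans_le hs.1)]
    _ ≤ √(Real.log (r / a)) * √(∫ s in a..r, s ^ 3 * ‖ω s‖ ^ 2) :=
        integral_mul_le_sqrt_log_mul_sqrt ha hr.1 (hω.norm.mono hsub) fun _ _ => norm_nonneg _
    _ ≤ √(Real.log (b / a)) * √(∫ s in Ioo a b, s ^ 3 * ‖ω s‖ ^ 2) := by
        refine mul_le_mul (Real.sqrt_le_sqrt ?_) (Real.sqrt_le_sqrt ?_) (Real.sqrt_nonneg _)
          (Real.sqrt_nonneg _)
        · exact Real.log_le_log (div_pos hr0 ha) (div_le_div_of_nonneg_right hr.2 ha.le)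
        · rw [← integral_Ioc_eq_integral_Ioo, ← integral_of_le (hr.1.trans hr.2)]
          refine integral_mono_interval le_rfl hr.1 hr.2
            (ae_restrict_of_forall_mem measurableSet_Ioc fun s hs =>
              mul_nonneg (pow_nonneg (ha.trans hs.1).le 3) (sq_nonneg _)) ?_
          exact (((continuous_pow 3).continuousOn.mul (hω.norm.pow 2)).mono
            (uIcc_of_le (hr.1.trans hr.2)).le).intervalIntegrable

theorem norm_le_of_integral_eq_zero_of_mul_eq_add {a b B : ℝ} {f F : ℝ → ℂ} {c : ℂ} (ha : 0 < a)
    (hab : a < b) (hF : ContinuousOn F (Icc a b)) (hFB : ∀ r ∈ Icc a b, ‖F r‖ ≤ B)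
    (hf : ∀ r ∈ Icc a b, (r : ℂ) * f r = F r + c) (h : ∫ r in a..b, f r = 0) : ‖c‖ ≤ B := by
  have hpos : ∀ r ∈ Icc a b, 0 < r := fun r hr => ha.trans_le hr.1
  refine norm_le_of_integral_smul_add_eq_zero hab.le
    (continuousOn_inv₀.mono fun r hr => (hpos r hr).ne') (fun r hr => (inv_pos.2 (hpos r hr)).le)
    ?_ hF hFB ?_
  · rw [integral_inv_of_pos ha (ha.trans hab)]
    exact Real.log_pos ((one_lt_div ha).2 hab)
  · rw [← h]
    refine integral_congr fun r hr => ?_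
    rw [uIcc_of_le hab.le] at hr
    rw [Complex.real_smul, ← hf r hr, Complex.ofReal_inv,
      inv_mul_cancel_left₀ (Complex.ofReal_ne_zero.2 (hpos r hr).ne')]

theorem sqrt_log_le_sqrt_div_mul_one_add_log {R : ℝ} (hR : 1 < R) :
    √(Real.log R) ≤ √(R / (R - 1)) * (1 + Real.log R) := by
  have hlog : 0 ≤ Real.log R := Real.log_nonneg hR.le
  have h1 : 1 ≤ √(R / (R - 1)) :=
    Real.one_le_sqrt.2 ((one_le_div (by linarith)).2 (by linarith))
  calc √(Real.log R) ≤ 1 + Real.log R := by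
        rw [Real.sqrt_le_left (by linarith)]; nlinarith
    _ ≤ √(R / (R - 1)) * (1 + Real.log R) := le_mul_of_one_le_left (by linarith) h1

theorem stmt_18 :
    ∃ C > (0 : ℝ), ∀ (R : ℝ), 1 < R → ∀ (φ φ' φ'' ω : ℝ → ℂ),
    (∀ r ∈ Icc (1 : ℝ) R, HasDerivAt φ (φ' r) r) →
    (∀ r ∈ Icc (1 : ℝ) R, HasDerivAt φ' (φ'' r) r) →
    ContinuousOn φ'' (Icc (1 : ℝ) R) →
    φ 1 = 0 → φ R = 0 →
    (∀ r ∈ Icc (1 : ℝ) R, φ'' r + ((r : ℂ))⁻¹ * φ' r = ω r) →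
    (∀ r ∈ Icc (1 : ℝ) R,
      (r : ℂ) * φ' r = (∫ s in (1 : ℝ)..r, (s : ℂ) * ω s) + φ' 1) ∧
    (∀ r ∈ Icc (1 : ℝ) R,
      ‖φ' r‖ ≤ C * Real.sqrt (R / (R - 1)) * (1 + Real.log R) *
        Real.sqrt (∫ s in Ioo (1 : ℝ) R, s ^ 3 * ‖ω s‖ ^ 2)) := by
  refine ⟨2, two_pos, fun R hR φ φ' φ'' ω hφ hφ' hφ''c hφ1 hφR hode => ?_⟩
  have hIcc : uIcc 1 R = Icc 1 R := uIcc_of_le hR.le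
  have hφ'c : ContinuousOn φ' (Icc 1 R) := fun r hr =>
    (hφ' r hr).continuousAt.continuousWithinAt
  have hω : ContinuousOn ω (Icc 1 R) :=
    (hφ''c.add ((Complex.continuous_ofReal.continuousOn.inv₀ fun r hr =>
      Complex.ofReal_ne_zero.2 (one_pos.trans_le hr.1).ne').mul hφ'c)).congr
      fun r hr => (hode r hr).symm
  set F : ℝ → ℂ := fun r => ∫ s in (1 : ℝ)..r, (s : ℂ) * ω s
  have hrep : ∀ r ∈ Icc 1 R, (r : ℂ) * φ' r = F r + φ' 1 := fun r hr => by
    simpa using mul_deriv_eq_integral_add one_pos hφ' hω hode hr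
  refine ⟨hrep, fun r hr => ?_⟩
  set M := √(∫ s in Ioo 1 R, s ^ 3 * ‖ω s‖ ^ 2)
  have hF : ∀ r ∈ Icc 1 R, ‖F r‖ ≤ √(Real.log R) * M := fun r hr => by
    simpa using norm_integral_ofReal_mul_le one_pos hr hω
  have hFc : ContinuousOn F (Icc 1 R) := hIcc ▸ continuousOn_primitive_interval
    (hIcc ▸ (Complex.continuous_ofReal.continuousOn.mul hω).integrableOn_Icc)
  have hmean : ∫ r in 1..R, φ' r = 0 := by
    rw [integral_eq_sub_of_hasDerivAt (fun r hr => hφ r (hIcc.le hr))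
      (hφ'c.mono hIcc.le).intervalIntegrable, hφR, hφ1, sub_zero]
  have hφ'1 := norm_le_of_integral_eq_zero_of_mul_eq_add one_pos hR hFc hF hrep hmean
  calc ‖φ' r‖ ≤ ‖F r‖ + ‖φ' 1‖ := by
        refine le_trans ?_ (norm_add_le _ _)
        rw [← hrep r hr, norm_mul, Complex.norm_real, Real.norm_of_nonneg (by linarith [hr.1])]
        exact le_mul_of_one_le_left (norm_nonneg _) hr.1
    _ ≤ 2 * (√(Real.log R) * M) := by linarith [hF r hr]
    _ ≤ 2 * √(R / (R - 1)) * (1 + Real.log R) * M := by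
        have := sqrt_log_le_sqrt_div_mul_one_add_log hR
        rw [mul_assoc 2, mul_assoc 2]
        gcongr
end
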